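/- For every λ ∈ (0,1), the (continuously extended) Tichy–Uitz function g_λ : [0,1] → [0,1] is differentiable almost everywhere with respect to Lebesgue measure, and g_λ′(x) = 0 for almost every x ∈ [0,1]; i.e. g_λ is a singular function. -/

import Mathlib

open Set Filter

/-- The mediant of two rationals (written in lowest terms). -/
def mediant (x y : ℚ) : ℚ :=
  ((x.num + y.num : ℤ) : ℚ) / ((x.den + y.den : ℕ) : ℚ)

/-- `x` and `y` are consecutive elements of the set `S`. -/
def IsConsecutive (S : Set ℚ) (x y : ℚ) : Prop :=
  x ∈ S ∧ y ∈ S ∧ x < y ∧ ∀ z ∈ S, ¬ (x < z ∧ z < y)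

/-- The Stern–Brocot sequences `ℱ_n`. -/
def sternBrocot : ℕ → Set ℚ
  | 0 => {0, 1}
  | n + 1 => sternBrocot n ∪
      {z | ∃ x y : ℚ, IsConsecutive (sternBrocot n) x y ∧ z = mediant x y}

/-- `Q_n`, the set of mediants newly inserted at step `n ≥ 1` of the
Stern–Brocot construction. -/
def newMediants (n : ℕ) : Set ℚ :=
  {z | ∃ x y : ℚ, IsConsecutive (sternBrocot (n - 1)) x y ∧ z = mediant x y}

/-- Value of the regular continued fraction `[0; a_1, …, a_m]`. -/
def cfVal : List ℕ → ℚ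
  | [] => 0
  | a :: t => 1 / ((a : ℚ) + cfVal t)

/-- `a` is the regular continued fraction expansion `[0; a_1, …, a_m]` of `x`,
with all partial quotients positive and the last one at least `2`. -/
def IsCF (x : ℚ) (a : List ℕ) : Prop :=
  (∀ ai ∈ a, 1 ≤ ai) ∧ 2 ≤ a.getLastD 0 ∧ x = cfVal a

/-- Value of `b_1 - 1/(b_2 - ⋯ - 1/b_l)` (using the convention `1/0 = 0`,
so that `rrTail [b] = b`). -/
def rrTail : List ℕ → ℚ
  | [] => 0
  | b :: t => (b : ℚ) - 1 / rrTail t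

/-- Value of the regular reduced continued fraction
`[[1; b_1, …, b_l]] = 1 - 1/(b_1 - 1/(b_2 - ⋯ - 1/b_l))`. -/
def rrcfVal (b : List ℕ) : ℚ := 1 - 1 / rrTail b

/-- `b` is the regular reduced continued fraction expansion
`[[1; b_1, …, b_l]]` of `x`, with all entries at least `2`. -/
def IsRRCF (x : ℚ) (b : List ℕ) : Prop :=
  (∀ bi ∈ b, 2 ≤ bi) ∧ x = rrcfVal b

/-- `Θ_k`: rationals in `(0,1)` whose regular reduced continued fraction
expansion satisfies `L(x) = b_1 + ⋯ + b_l = k + 1`. -/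
def Theta (k : ℕ) : Set ℚ :=
  {x | x ∈ Set.Ioo (0 : ℚ) 1 ∧ ∃ b : List ℕ, IsRRCF x b ∧ b.sum = k + 1}

/-- `Ξ_n = {0, 1} ∪ Θ_1 ∪ ⋯ ∪ Θ_n`. -/
def Xi (n : ℕ) : Set ℚ :=
  {0, 1} ∪ ⋃ k ∈ Finset.Icc 1 n, Theta k

/-!
Every `x ∈ [0,1]` lies in nested Stern–Brocot intervals `[a_n, b_n]` whose endpoints are Farey
neighbours, so their widths `1 / (den a_n * den b_n)` tend to `0`. Passing to the left or right
half multiplies the increment of `g` by `λ` or `1 - λ`, and the width by a ratio `ρ_n` read off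
from the denominators. If `g'(x) = c ≠ 0`, the slopes over these intervals tend to `c`, so `ρ_n`
is asymptotic to `λ` or `1 - λ`. But after two steps in the same direction
`ρ_{n+1} = 1 / (2 - ρ_n)`, and the only fixed point of `t ↦ 1 / (2 - t)` is `1`; hence the
directions eventually alternate. Such `x` form a countable set, while `g` is monotone and thus
differentiable almost everywhere.
-/

open Topology

namespace List

variable {α : Type*}

theorem isChain_iff_forall_pair_infix {R : α → α → Prop} {l : List α} :
    IsChain R l ↔ ∀ a b, [a, b] <:+: l → R a b := by
  rw [isChain_iff_forall_rel_of_append_cons_cons]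
  constructor
  · rintro h a b ⟨s, t, rfl⟩
    exact h (l₁ := s) (l₂ := t) (by simp)
  · rintro h a b s t rfl
    exact h a b ⟨s, t, by simp⟩

theorem pair_infix_cons_cons {x y a b : α} {t : List α} :
    [x, y] <:+: a :: b :: t ↔ x = a ∧ y = b ∨ [x, y] <:+: b :: t := by
  simp [infix_cons_iff (l₂ := b :: t)]

theorem IsChain.strictMonoOn [LinearOrder α] {β : Type*} [Preorder β] {f : α → β}
    {l : List α} (h : l.IsChain fun a b => a < b ∧ f a < f b) : StrictMonoOn f {x | x ∈ l} := by
  have : Trans (fun a b : α => a < b ∧ f a < f b) (fun a b => a < b ∧ f a < f b)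
      (fun a b => a < b ∧ f a < f b) := ⟨fun h₁ h₂ => ⟨h₁.1.trans h₂.1, h₁.2.trans h₂.2⟩⟩
  rw [isChain_iff_pairwise] at h
  induction l with
  | nil => exact fun _ hx => by simp at hx
  | cons a t ih =>
    rw [pairwise_cons] at h
    intro x hx y hy hxy
    simp only [Set.mem_ofPred_eq, mem_cons] at hx hy
    rcases hx with rfl | hx <;> rcases hy with rfl | hy
    · exact absurd hxy (lt_irrefl _)
    · exact (h.1 y hy).2
    · exact absurd ((h.1 x hx).1.trans hxy) (lt_irrefl _)
    · exact ih h.2 hx hy hxy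

def insertBetween (f : α → α → α) : List α → List α
  | [] => []
  | [a] => [a]
  | a :: b :: t => a :: f a b :: insertBetween f (b :: t)

variable {f : α → α → α}

theorem mem_insertBetween : ∀ {l : List α} {z : α},
    z ∈ l.insertBetween f ↔ z ∈ l ∨ ∃ a b, [a, b] <:+: l ∧ z = f a b
  | [], z => by simp [insertBetween]
  | [a], z => by simp [insertBetween, infix_cons_iff]
  | a :: b :: t, z => by
    simp only [insertBetween, mem_cons, mem_insertBetween (l := b :: t), pair_infix_cons_cons]
    grind

theorem pair_infix_insertBetween : ∀ {l : List α} {u v : α},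
    [u, v] <:+: l.insertBetween f ↔
      ∃ a b, [a, b] <:+: l ∧ (u = a ∧ v = f a b ∨ u = f a b ∧ v = b)
  | [], u, v => by simp [insertBetween]
  | [a], u, v => by simp [insertBetween, infix_cons_iff]
  | a :: b :: t, u, v => by
    have hhead : [u, v] <:+: f a b :: (b :: t).insertBetween f ↔
        u = f a b ∧ v = b ∨ [u, v] <:+: (b :: t).insertBetween f := by
      cases t <;> simp [insertBetween, infix_cons_iff]
    show [u, v] <:+: a :: f a b :: (b :: t).insertBetween f ↔ _
    rw [pair_infix_cons_cons, hhead, pair_infix_insertBetween]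
    simp only [pair_infix_cons_cons]
    grind

theorem IsChain.insertBetween {R : α → α → Prop} {l : List α}
    (h : ∀ a b, [a, b] <:+: l → R a (f a b) ∧ R (f a b) b) :
    (l.insertBetween f).IsChain R := by
  refine isChain_iff_forall_pair_infix.2 fun u v huv => ?_
  obtain ⟨a, b, hab, ⟨hu, hv⟩ | ⟨hu, hv⟩⟩ := pair_infix_insertBetween.1 huv <;> rw [hu, hv]
  exacts [(h a b hab).1, (h a b hab).2]

end List

theorem HasDerivAt.tendsto_slope_of_mem_Ioo {ι : Type*} {l : Filter ι} {f : ℝ → ℝ} {c x : ℝ}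
    {a b : ι → ℝ} (hf : HasDerivAt f c x) (ha : Tendsto a l (𝓝 x)) (hb : Tendsto b l (𝓝 x))
    (hx : ∀ i, x ∈ Ioo (a i) (b i)) : Tendsto (fun i => slope f (a i) (b i)) l (𝓝 c) := by
  have hslope := hasDerivAt_iff_tendsto_slope.1 hf
  have hA : Tendsto (fun i => slope f (a i) x) l (𝓝 c) := by
    simp_rw [slope_comm f _ x]
    exact hslope.comp (tendsto_nhdsWithin_iff.2 ⟨ha, .of_forall fun i => (hx i).1.ne⟩)
  have hB : Tendsto (fun i => slope f x (b i)) l (𝓝 c) :=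
    hslope.comp (tendsto_nhdsWithin_iff.2 ⟨hb, .of_forall fun i => (hx i).2.ne'⟩)
  have hcombo i : ∃ w₁ w₂ : ℝ, 0 ≤ w₁ ∧ 0 ≤ w₂ ∧ w₁ + w₂ = 1 ∧
      w₁ • slope f (a i) x + w₂ • slope f x (b i) = slope f (a i) (b i) := by
    obtain ⟨hax, hxb⟩ := hx i
    refine ⟨_, _, by bound, by bound, ?_,
      sub_div_sub_smul_slope_add_sub_div_sub_smul_slope f _ _ _⟩
    rw [← add_div, div_eq_one_iff_eq (by linarith)]
    ring
  refine tendsto_of_tendsto_of_tendsto_of_le_of_le (by simpa using hA.min hB)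
    (by simpa using hA.max hB) (fun i => ?_) (fun i => ?_) <;>
  · obtain ⟨w₁, w₂, hw₁, hw₂, hw, hcombo⟩ := hcombo i
    rw [← hcombo]
    first
    | exact Convex.min_le_combo _ _ hw₁ hw₂ hw
    | exact Convex.combo_le_max _ _ hw₁ hw₂ hw

/-- The only fixed point of `t ↦ 1 / (2 - t)` is `1`. -/
theorem eq_one_of_frequently_mul_two_sub {ρ f : ℕ → ℝ} {μ : ℝ} {p : ℕ → Prop} (hμ : μ ≠ 0)
    (hρ : Tendsto (fun n => ρ n / f n) atTop (𝓝 1)) (hp : ∃ᶠ n in atTop, p n)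
    (hpf : ∀ n, p n → f n = μ ∧ f (n + 1) = μ ∧ ρ (n + 1) * (2 - ρ n) = 1) : μ = 1 := by
  set l := atTop ⊓ 𝓟 {n | p n}
  have : l.NeBot := frequently_iff_neBot.1 hp
  have hl : ∀ᶠ n in l, p n := mem_inf_of_right (mem_principal_self _)
  have h₀ : Tendsto ρ l (𝓝 μ) := by
    refine (mul_one μ ▸ (hρ.mono_left inf_le_left).const_mul μ).congr' (hl.mono fun n hn => ?_)
    rw [(hpf n hn).1]
    field_simp
  have h₁ : Tendsto (fun n => ρ (n + 1)) l (𝓝 μ) := by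
    have hsucc : Tendsto (fun n => ρ (n + 1) / f (n + 1)) l (𝓝 1) :=
      hρ.comp ((tendsto_add_atTop_nat 1).mono_left inf_le_left)
    refine (mul_one μ ▸ hsucc.const_mul μ).congr' (hl.mono fun n hn => ?_)
    rw [(hpf n hn).2.1]
    field_simp
  have hfix : μ * (2 - μ) = 1 := tendsto_nhds_unique (h₁.mul (tendsto_const_nhds.sub h₀))
    (tendsto_const_nhds.congr' (hl.mono fun n hn => (hpf n hn).2.2.symm))
  nlinarith [sq_nonneg (μ - 1)]

theorem mediant_eq (a b : ℚ) : mediant a b = (a * a.den + b * b.den) / (a.den + b.den) := by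
  rw [mediant, Rat.mul_den_eq_num, Rat.mul_den_eq_num]
  push_cast
  rfl

theorem lt_mediant {a b : ℚ} (h : a < b) : a < mediant a b := by
  rw [mediant_eq, lt_div_iff₀ (by positivity)]
  nlinarith [mul_lt_mul_of_pos_right h (show (0 : ℚ) < b.den by positivity)]

theorem mediant_lt {a b : ℚ} (h : a < b) : mediant a b < b := by
  rw [mediant_eq, div_lt_iff₀ (by positivity)]
  nlinarith [mul_lt_mul_of_pos_right h (show (0 : ℚ) < a.den by positivity)]

theorem isConsecutive_iff_pair_infix {l : List ℚ} (hl : l.Pairwise (· < ·)) {x y : ℚ} :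
    IsConsecutive {z | z ∈ l} x y ↔ [x, y] <:+: l := by
  constructor
  · rintro ⟨hx, hy, hxy, hgap⟩
    obtain ⟨s, r, rfl⟩ := List.append_of_mem hx
    rw [List.pairwise_append, List.pairwise_cons] at hl
    have hyr : y ∈ r := by
      rcases List.mem_append.1 hy with hys | hyr
      · exact absurd (hl.2.2 y hys x List.mem_cons_self) hxy.asymm
      · exact (List.mem_cons.1 hyr).resolve_left hxy.ne'
    obtain ⟨c, r, rfl⟩ := List.exists_cons_of_ne_nil (List.ne_nil_of_mem hyr)
    have hxc : x < c := hl.2.1.1 c List.mem_cons_self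
    have hyc : y = c := by
      rcases List.mem_cons.1 hyr with rfl | hyr
      · rfl
      · have hcy : c < y := (List.pairwise_cons.1 hl.2.1.2).1 y hyr
        exact absurd ⟨hxc, hcy⟩ (hgap c (by simp))
    exact ⟨s, r, by simp [hyc]⟩
  · rintro ⟨s, t, rfl⟩
    simp only [List.append_assoc, List.cons_append, List.nil_append, List.pairwise_append,
      List.pairwise_cons, List.mem_cons] at hl
    refine ⟨by simp, by simp, hl.2.1.1 y (by simp), ?_⟩
    rintro z hz ⟨hxz, hzy⟩
    simp only [List.append_assoc, List.cons_append, List.nil_append, Set.mem_ofPred_eq,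
      List.mem_append, List.mem_cons] at hz
    rcases hz with hz | rfl | rfl | hz
    · exact (hl.2.2 z hz x (by simp)).asymm hxz
    · exact lt_irrefl _ hxz
    · exact lt_irrefl _ hzy
    · exact (hl.2.1.2.1 z hz).asymm hzy

namespace SternBrocot

/-- The Stern–Brocot sequence `ℱ_n` as an increasing list. -/
def sbList : ℕ → List ℚ
  | 0 => [0, 1]
  | n + 1 => (sbList n).insertBetween mediant

theorem isChain_sbList : ∀ n, (sbList n).IsChain (· < ·)
  | 0 => by simp [sbList]
  | n + 1 => List.IsChain.insertBetween fun _ _ hab =>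
      have hab := List.isChain_iff_forall_pair_infix.1 (isChain_sbList n) _ _ hab
      ⟨lt_mediant hab, mediant_lt hab⟩

theorem sternBrocot_eq_sbList : ∀ n, sternBrocot n = {z | z ∈ sbList n}
  | 0 => by ext; simp [sternBrocot, sbList]
  | n + 1 => by
    ext z
    simp only [sternBrocot, sternBrocot_eq_sbList n,
      isConsecutive_iff_pair_infix (List.isChain_iff_pairwise.1 (isChain_sbList n))]
    simp [sbList, List.mem_insertBetween]

theorem isConsecutive_sternBrocot_iff {n : ℕ} {x y : ℚ} :
    IsConsecutive (sternBrocot n) x y ↔ [x, y] <:+: sbList n := by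
  rw [sternBrocot_eq_sbList,
    isConsecutive_iff_pair_infix (List.isChain_iff_pairwise.1 (isChain_sbList n))]

theorem pair_infix_sbList_zero {a b : ℚ} : [a, b] <:+: sbList 0 ↔ a = 0 ∧ b = 1 := by
  simp [sbList, List.infix_cons_iff]

theorem mem_Icc_of_mem_sbList : ∀ {n : ℕ} {z : ℚ}, z ∈ sbList n → z ∈ Icc 0 1
  | 0, z, hz => by
    simp only [sbList, List.mem_cons, List.not_mem_nil, or_false] at hz
    rcases hz with rfl | rfl <;> simp
  | n + 1, z, hz => by
    rcases List.mem_insertBetween.1 hz with hz | ⟨a, b, hab, rfl⟩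
    · exact mem_Icc_of_mem_sbList hz
    · have hlt := List.isChain_iff_forall_pair_infix.1 (isChain_sbList n) a b hab
      exact ⟨(mem_Icc_of_mem_sbList (hab.subset (by simp))).1.trans (lt_mediant hlt).le,
        (mediant_lt hlt).le.trans (mem_Icc_of_mem_sbList (hab.subset (by simp))).2⟩

def IsFareyPair (a b : ℚ) : Prop := b.num * a.den - a.num * b.den = 1

namespace IsFareyPair

variable {a b : ℚ}

theorem mediant_num_den (h : IsFareyPair a b) :
    (mediant a b).num = a.num + b.num ∧ (mediant a b).den = a.den + b.den := by
  have hpos : (0 : ℤ) < ((a.den + b.den : ℕ) : ℤ) := by positivity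
  have hcop : (a.num + b.num).natAbs.Coprime ((a.den + b.den : ℕ) : ℤ).natAbs := by
    refine Int.isCoprime_iff_gcd_eq_one.1 ⟨-b.den, b.num, ?_⟩
    unfold IsFareyPair at h
    push_cast
    linear_combination h
  have hm : mediant a b = ((a.num + b.num : ℤ) : ℚ) / (((a.den + b.den : ℕ) : ℤ) : ℚ) := by
    rw [mediant, Int.cast_natCast]
  rw [hm, Rat.num_div_eq_of_coprime hpos hcop]
  exact ⟨rfl, by exact_mod_cast Rat.den_div_eq_of_coprime hpos hcop⟩

theorem mediant_left (h : IsFareyPair a b) : IsFareyPair a (mediant a b) := by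
  obtain ⟨hnum, hden⟩ := h.mediant_num_den
  unfold IsFareyPair at h ⊢
  rw [hnum, hden]
  push_cast
  linear_combination h

theorem mediant_right (h : IsFareyPair a b) : IsFareyPair (mediant a b) b := by
  obtain ⟨hnum, hden⟩ := h.mediant_num_den
  unfold IsFareyPair at h ⊢
  rw [hnum, hden]
  push_cast
  linear_combination h

theorem sub_eq (h : IsFareyPair a b) : b - a = 1 / (a.den * b.den) := by
  have h' : (b.num * a.den - a.num * b.den : ℚ) = 1 := by exact_mod_cast h
  rw [eq_div_iff (by positivity), ← Rat.mul_den_eq_num a, ← Rat.mul_den_eq_num b] at *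
  linear_combination h'

end IsFareyPair

theorem isFareyPair_of_pair_infix : ∀ {n : ℕ} {a b : ℚ}, [a, b] <:+: sbList n → IsFareyPair a b
  | 0, a, b, h => by
    obtain ⟨rfl, rfl⟩ := pair_infix_sbList_zero.1 h
    simp [IsFareyPair]
  | n + 1, u, v, h => by
    obtain ⟨a, b, hab, ⟨rfl, rfl⟩ | ⟨rfl, rfl⟩⟩ := List.pair_infix_insertBetween.1 h
    exacts [(isFareyPair_of_pair_infix hab).mediant_left,
      (isFareyPair_of_pair_infix hab).mediant_right]

theorem den_add_den_ge : ∀ {n : ℕ} {a b : ℚ}, [a, b] <:+: sbList n → n + 2 ≤ a.den + b.den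
  | 0, a, b, h => by
    obtain ⟨rfl, rfl⟩ := pair_infix_sbList_zero.1 h
    simp
  | n + 1, u, v, h => by
    obtain ⟨a, b, hab, ⟨hu, hv⟩ | ⟨hu, hv⟩⟩ := List.pair_infix_insertBetween.1 h <;>
    · rw [hu, hv, (isFareyPair_of_pair_infix hab).mediant_num_den.2]
      have := den_add_den_ge hab
      have := a.pos
      have := b.pos
      omega

theorem sub_le_of_pair_infix {n : ℕ} {a b : ℚ} (h : [a, b] <:+: sbList n) :
    b - a ≤ 1 / (n + 1) := by
  rw [(isFareyPair_of_pair_infix h).sub_eq]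
  have hsum := den_add_den_ge h
  have ha := a.pos
  have hb := b.pos
  have hprod : n + 1 ≤ a.den * b.den := by nlinarith
  gcongr
  exact_mod_cast hprod

/-- `child I true` is the left half of `I`, `child I false` the right half. -/
def child (I : ℚ × ℚ) : Bool → ℚ × ℚ
  | true => (I.1, mediant I.1 I.2)
  | false => (mediant I.1 I.2, I.2)

def shrinkRatio (I : ℚ × ℚ) (d : Bool) : ℚ := ((child I d).2 - (child I d).1) / (I.2 - I.1)

theorem pair_infix_child {l : List ℚ} {I : ℚ × ℚ} (h : [I.1, I.2] <:+: l) (d : Bool) :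
    [(child I d).1, (child I d).2] <:+: l.insertBetween mediant :=
  List.pair_infix_insertBetween.2 ⟨I.1, I.2, h, by cases d <;> simp [child]⟩

theorem isFareyPair_child {I : ℚ × ℚ} (h : IsFareyPair I.1 I.2) (d : Bool) :
    IsFareyPair (child I d).1 (child I d).2 := by
  cases d
  exacts [h.mediant_right, h.mediant_left]

theorem IsFareyPair.shrinkRatio_child_mul {I : ℚ × ℚ} (h : IsFareyPair I.1 I.2) (d : Bool) :
    shrinkRatio (child I d) d * (2 - shrinkRatio I d) = 1 := by
  have h₁ := isFareyPair_child h d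
  have h₂ := isFareyPair_child h₁ d
  have hp : (0 : ℚ) < I.1.den := by positivity
  have hq : (0 : ℚ) < I.2.den := by positivity
  cases d <;>
  · simp only [shrinkRatio, child] at h₁ h₂ ⊢
    rw [h.sub_eq, h₁.sub_eq, h₂.sub_eq, h₁.mediant_num_den.2, h.mediant_num_den.2]
    push_cast
    field_simp
    ring

noncomputable def sbPath (x : ℝ) : ℕ → ℚ × ℚ
  | 0 => (0, 1)
  | n + 1 => child (sbPath x n) (decide (x < mediant (sbPath x n).1 (sbPath x n).2))

noncomputable def sbDir (x : ℝ) (n : ℕ) : Bool :=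
  decide (x < mediant (sbPath x n).1 (sbPath x n).2)

theorem sbPath_succ (x : ℝ) (n : ℕ) : sbPath x (n + 1) = child (sbPath x n) (sbDir x n) := rfl

theorem sbPath_pair_infix (x : ℝ) : ∀ n, [(sbPath x n).1, (sbPath x n).2] <:+: sbList n
  | 0 => by simp [sbPath, sbList]
  | n + 1 => pair_infix_child (sbPath_pair_infix x n) _

theorem sbPath_mem_Icc (x : ℝ) (n : ℕ) :
    ((sbPath x n).1 : ℝ) ∈ Icc 0 1 ∧ ((sbPath x n).2 : ℝ) ∈ Icc 0 1 := by
  have h₁ := mem_Icc_of_mem_sbList ((sbPath_pair_infix x n).subset (a := (sbPath x n).1) (by simp))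
  have h₂ := mem_Icc_of_mem_sbList ((sbPath_pair_infix x n).subset (a := (sbPath x n).2) (by simp))
  exact ⟨⟨by exact_mod_cast h₁.1, by exact_mod_cast h₁.2⟩,
    ⟨by exact_mod_cast h₂.1, by exact_mod_cast h₂.2⟩⟩

theorem sbPath_width_le (x : ℝ) (n : ℕ) :
    ((sbPath x n).2 : ℝ) - (sbPath x n).1 ≤ 1 / (n + 1) := by
  have h := sub_le_of_pair_infix (sbPath_pair_infix x n)
  rw [← Rat.cast_le (K := ℝ)] at h
  push_cast at h
  exact h

section

variable {x : ℝ}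

theorem mem_Icc_sbPath (hx : x ∈ Icc (0 : ℝ) 1) :
    ∀ n, x ∈ Icc ((sbPath x n).1 : ℝ) (sbPath x n).2
  | 0 => by simpa [sbPath] using hx
  | n + 1 => by
    have ih := mem_Icc_sbPath hx n
    by_cases hd : x < mediant (sbPath x n).1 (sbPath x n).2
    · simpa [sbPath, child, hd] using ⟨ih.1, hd.le⟩
    · simpa [sbPath, child, hd] using ⟨not_lt.1 hd, ih.2⟩

theorem mem_Ioo_sbPath (hx : x ∈ Icc (0 : ℝ) 1) (hirr : Irrational x) (n : ℕ) :
    x ∈ Ioo ((sbPath x n).1 : ℝ) (sbPath x n).2 :=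
  ⟨(mem_Icc_sbPath hx n).1.lt_of_ne (hirr.ne_rat _).symm,
    (mem_Icc_sbPath hx n).2.lt_of_ne (hirr.ne_rat _)⟩

theorem tendsto_sbPath_fst (hx : x ∈ Icc (0 : ℝ) 1) :
    Tendsto (fun n => ((sbPath x n).1 : ℝ)) atTop (𝓝[Icc 0 1] x) := by
  refine tendsto_nhdsWithin_iff.2 ⟨?_, .of_forall fun n => (sbPath_mem_Icc x n).1⟩
  have hlow : Tendsto (fun n : ℕ => x - 1 / ((n : ℝ) + 1)) atTop (𝓝 x) := by
    simpa using tendsto_const_nhds.sub (tendsto_one_div_add_atTop_nhds_zero_nat (𝕜 := ℝ))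
  refine tendsto_of_tendsto_of_tendsto_of_le_of_le hlow tendsto_const_nhds (fun n => ?_)
    (fun n => (mem_Icc_sbPath hx n).1)
  linarith [sbPath_width_le x n, (mem_Icc_sbPath hx n).2]

theorem tendsto_sbPath_snd (hx : x ∈ Icc (0 : ℝ) 1) :
    Tendsto (fun n => ((sbPath x n).2 : ℝ)) atTop (𝓝[Icc 0 1] x) := by
  refine tendsto_nhdsWithin_iff.2 ⟨?_, .of_forall fun n => (sbPath_mem_Icc x n).2⟩
  have hup : Tendsto (fun n : ℕ => x + 1 / ((n : ℝ) + 1)) atTop (𝓝 x) := by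
    simpa using tendsto_const_nhds.add (tendsto_one_div_add_atTop_nhds_zero_nat (𝕜 := ℝ))
  refine tendsto_of_tendsto_of_tendsto_of_le_of_le tendsto_const_nhds hup
    (fun n => (mem_Icc_sbPath hx n).2) (fun n => ?_)
  linarith [sbPath_width_le x n, (mem_Icc_sbPath hx n).1]

end

theorem sbPath_eq_of_alternating {x y : ℝ} {N : ℕ} (hI : sbPath x N = sbPath y N)
    (hd : sbDir x N = sbDir y N) (hx : ∀ n ≥ N, sbDir x (n + 1) = !sbDir x n)
    (hy : ∀ n ≥ N, sbDir y (n + 1) = !sbDir y n) :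
    ∀ n ≥ N, sbPath x n = sbPath y n ∧ sbDir x n = sbDir y n := by
  intro n hn
  induction n, hn using Nat.le_induction with
  | base => exact ⟨hI, hd⟩
  | succ n hn ih =>
    exact ⟨by rw [sbPath_succ, sbPath_succ, ih.1, ih.2], by rw [hx n hn, hy n hn, ih.2]⟩

theorem eq_of_eventually_sbPath_eq {x y : ℝ} (hx : x ∈ Icc 0 1) (hy : y ∈ Icc 0 1)
    (h : ∀ᶠ n in atTop, sbPath x n = sbPath y n) : x = y :=
  tendsto_nhds_unique ((tendsto_sbPath_fst hx).mono_right nhdsWithin_le_nhds)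
    (((tendsto_sbPath_fst hy).mono_right nhdsWithin_le_nhds).congr'
      (h.mono fun n hn => by rw [← hn]))

theorem countable_setOf_eventually_alternating :
    {x ∈ Icc (0 : ℝ) 1 | ∀ᶠ n in atTop, sbDir x (n + 1) = !sbDir x n}.Countable := by
  let T (k : ℕ × (ℚ × ℚ) × Bool) : Set ℝ := {x ∈ Icc 0 1 | sbPath x k.1 = k.2.1 ∧
    sbDir x k.1 = k.2.2 ∧ ∀ n ≥ k.1, sbDir x (n + 1) = !sbDir x n}
  refine (countable_iUnion fun k => (?_ : (T k).Subsingleton).countable).mono ?_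
  · rintro x ⟨hx, hxI, hxd, hxalt⟩ y ⟨hy, hyI, hyd, hyalt⟩
    refine eq_of_eventually_sbPath_eq hx hy (eventually_atTop.2 ⟨k.1, fun n hn => ?_⟩)
    exact (sbPath_eq_of_alternating (hxI.trans hyI.symm) (hxd.trans hyd.symm) hxalt hyalt
      n hn).1
  · rintro x ⟨hx, halt⟩
    obtain ⟨N, hN⟩ := eventually_atTop.1 halt
    exact mem_iUnion.2 ⟨(N, sbPath x N, sbDir x N), hx, rfl, rfl, hN⟩

/-- The defining recursion of `g_λ`, read on the list model of the Stern–Brocot sequences. -/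
def MediantRecursion (lam : ℝ) (g : ℝ → ℝ) : Prop :=
  ∀ n a b, [a, b] <:+: sbList n → g (mediant a b) = g a + lam * (g b - g a)

theorem cond_mem_Ioo {lam : ℝ} (hlam : lam ∈ Ioo 0 1) (d : Bool) :
    cond d lam (1 - lam) ∈ Ioo 0 1 := by
  cases d <;> constructor <;> simp <;> linarith [hlam.1, hlam.2]

namespace MediantRecursion

variable {lam : ℝ} {g : ℝ → ℝ}

theorem slope_child (hrec : MediantRecursion lam g) {n : ℕ} {I : ℚ × ℚ}
    (hI : [I.1, I.2] <:+: sbList n) (d : Bool) :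
    slope g (child I d).1 (child I d).2 * shrinkRatio I d =
      cond d lam (1 - lam) * slope g I.1 I.2 := by
  have hlt := List.isChain_iff_forall_pair_infix.1 (isChain_sbList n) _ _ hI
  have h₁ : ((I.2 : ℝ) - I.1) ≠ 0 := sub_ne_zero.2 (by exact_mod_cast hlt.ne')
  have h₂ : ((mediant I.1 I.2 : ℝ) - I.1) ≠ 0 :=
    sub_ne_zero.2 (by exact_mod_cast (lt_mediant hlt).ne')
  have h₃ : ((I.2 : ℝ) - mediant I.1 I.2) ≠ 0 :=
    sub_ne_zero.2 (by exact_mod_cast (mediant_lt hlt).ne')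
  cases d <;>
  · simp only [child, shrinkRatio, slope_def_field, cond, hrec n _ _ hI]
    push_cast
    field_simp
    ring

theorem isChain_sbList_apply_lt (hlam : lam ∈ Ioo 0 1) (hg0 : g 0 = 0) (hg1 : g 1 = 1)
    (hrec : MediantRecursion lam g) :
    ∀ n, (sbList n).IsChain fun a b : ℚ => a < b ∧ g a < g b
  | 0 => by simp [sbList, hg0, hg1]
  | n + 1 => List.IsChain.insertBetween fun a b hab => by
      obtain ⟨hlt, hglt⟩ :=
        List.isChain_iff_forall_pair_infix.1 (isChain_sbList_apply_lt hlam hg0 hg1 hrec n) a b hab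
      rw [hrec n a b hab]
      refine ⟨⟨lt_mediant hlt, ?_⟩, mediant_lt hlt, ?_⟩ <;> nlinarith [hlam.1, hlam.2]

theorem monotoneOn (hlam : lam ∈ Ioo 0 1) (hg0 : g 0 = 0) (hg1 : g 1 = 1)
    (hgc : ContinuousOn g (Icc 0 1)) (hrec : MediantRecursion lam g) :
    MonotoneOn g (Icc 0 1) := by
  intro p hp q hq hpq
  rcases hpq.eq_or_lt with rfl | hpq
  · rfl
  have hsep : ∀ᶠ n in atTop, ((sbPath p n).2 : ℝ) < (sbPath q n).1 :=
    ((tendsto_sbPath_snd hp).mono_right nhdsWithin_le_nhds).eventually_lt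
      ((tendsto_sbPath_fst hq).mono_right nhdsWithin_le_nhds) hpq
  refine le_of_tendsto_of_tendsto ((hgc p hp).tendsto.comp (tendsto_sbPath_snd hp))
    ((hgc q hq).tendsto.comp (tendsto_sbPath_fst hq)) (hsep.mono fun n hn => ?_)
  exact ((isChain_sbList_apply_lt hlam hg0 hg1 hrec n).strictMonoOn
    ((sbPath_pair_infix p n).subset (by simp)) ((sbPath_pair_infix q n).subset (by simp))
    (by exact_mod_cast hn)).le

theorem eq_zero_of_hasDerivAt (hlam : lam ∈ Ioo 0 1) (hrec : MediantRecursion lam g) {x c : ℝ}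
    (hx : x ∈ Icc 0 1) (hirr : Irrational x) (hder : HasDerivAt g c x)
    (hnalt : ¬ ∀ᶠ n in atTop, sbDir x (n + 1) = !sbDir x n) : c = 0 := by
  by_contra hc
  set s : ℕ → ℝ := fun n => slope g (sbPath x n).1 (sbPath x n).2
  set ρ : ℕ → ℝ := fun n => shrinkRatio (sbPath x n) (sbDir x n)
  set f : ℕ → ℝ := fun n => cond (sbDir x n) lam (1 - lam)
  have hs : Tendsto s atTop (𝓝 c) :=
    hder.tendsto_slope_of_mem_Ioo ((tendsto_sbPath_fst hx).mono_right nhdsWithin_le_nhds)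
      ((tendsto_sbPath_snd hx).mono_right nhdsWithin_le_nhds) (mem_Ioo_sbPath hx hirr)
  have hs' : Tendsto (fun n => s (n + 1)) atTop (𝓝 c) := hs.comp (tendsto_add_atTop_nat 1)
  have hρ : Tendsto (fun n => ρ n / f n) atTop (𝓝 1) := by
    refine (div_self hc ▸ hs.div hs' hc).congr' ((hs'.eventually_ne hc).mono fun n hn => ?_)
    have hstep : s (n + 1) * ρ n = f n * s n := hrec.slope_child (sbPath_pair_infix x n) _
    show s n / s (n + 1) = ρ n / f n
    rw [div_eq_div_iff hn (cond_mem_Ioo hlam _).1.ne']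
    linear_combination -hstep
  obtain ⟨d, hd⟩ : ∃ d, ∃ᶠ n in atTop, sbDir x n = d ∧ sbDir x (n + 1) = d := by
    have h := (not_eventually.1 hnalt).mono fun n =>
      show ¬sbDir x (n + 1) = !sbDir x n → (sbDir x n = true ∧ sbDir x (n + 1) = true) ∨
          (sbDir x n = false ∧ sbDir x (n + 1) = false) by
        cases sbDir x n <;> cases sbDir x (n + 1) <;> simp
    rcases frequently_or_distrib.1 h with h | h
    exacts [⟨true, h⟩, ⟨false, h⟩]
  refine (cond_mem_Ioo hlam d).2.ne (eq_one_of_frequently_mul_two_sub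
    (cond_mem_Ioo hlam d).1.ne' hρ hd fun n ⟨h₁, h₂⟩ => ⟨by simp [f, h₁], by simp [f, h₂], ?_⟩)
  have := (isFareyPair_of_pair_infix (sbPath_pair_infix x n)).shrinkRatio_child_mul d
  simp only [ρ, sbPath_succ, h₁, h₂]
  exact_mod_cast this

end MediantRecursion

end SternBrocot

/-- `g_λ` is singular: almost everywhere on `[0,1]` it is
differentiable with derivative zero. -/
theorem tichyUitz_deriv_zero_ae
    (lam : ℝ) (hlam : lam ∈ Set.Ioo (0 : ℝ) 1)
    (g : ℝ → ℝ)
    (hg0 : g 0 = 0) (hg1 : g 1 = 1)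
    (hgc : ContinuousOn g (Set.Icc (0 : ℝ) 1))
    (hrec : ∀ n : ℕ, ∀ x y : ℚ, IsConsecutive (sternBrocot n) x y →
      g ((mediant x y : ℚ) : ℝ) = g (x : ℝ) + lam * (g (y : ℝ) - g (x : ℝ))) :
    ∀ᵐ x ∂(MeasureTheory.volume : MeasureTheory.Measure ℝ),
      x ∈ Set.Icc (0 : ℝ) 1 → HasDerivAt g 0 x := by
  have hrec' : SternBrocot.MediantRecursion lam g := fun n a b h =>
    hrec n a b (SternBrocot.isConsecutive_sternBrocot_iff.2 h)
  have hdiff := (hrec'.monotoneOn hlam hg0 hg1 hgc).ae_differentiableWithinAt_of_mem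
  have hirr : ∀ᵐ x : ℝ, Irrational x := (countable_range ((↑) : ℚ → ℝ)).ae_notMem _
  have halt :=
    SternBrocot.countable_setOf_eventually_alternating.ae_notMem MeasureTheory.volume
  filter_upwards [hdiff, hirr, halt] with x hxdiff hxirr hxalt hx
  have hIcc : Icc (0 : ℝ) 1 ∈ 𝓝 x :=
    Icc_mem_nhds (hx.1.lt_of_ne hxirr.ne_zero.symm) (hx.2.lt_of_ne hxirr.ne_one)
  have hder := ((hxdiff hx).differentiableAt hIcc).hasDerivAt
  rwa [hrec'.eq_zero_of_hasDerivAt hlam hx hxirr hder fun h => hxalt ⟨hx, h⟩] at hder
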